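/- arXiv:2504.07886 — 7 statements merged into one kernel-verified Lean document; each statement's English description precedes it below -/
import Mathlib

section
/- Let D be a Weyl connection on an n-dimensional Riemannian manifold (M,g) with Lee form θ, and suppose ξ is a unit length vector field spanning a 1-dimensional D-parallel distribution. Then ∇_X ξ = -θ(ξ)X + g(X,ξ)θ^♯ for all vector fields X, where ∇ is the Levi-Civita connection of g. -/
open scoped BigOperators

/-- Abstract calculus of vector fields on a "manifold" with point set `M`:
vector fields form a module `V` over the ring of functions `M → ℝ`, act on
functions as derivations, and carry a Lie bracket. -/
structure VFCalculus (M : Type*) (V : Type*) [AddCommGroup V] [Module (M → ℝ) V] where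
  act : V → (M → ℝ) → (M → ℝ)
  act_add_left : ∀ X Y f, act (X + Y) f = act X f + act Y f
  act_smul_left : ∀ (h : M → ℝ) X f, act (h • X) f = h * act X f
  act_add_right : ∀ X f g, act X (f + g) = act X f + act X g
  act_mul : ∀ X f g, act X (f * g) = f * act X g + g * act X f
  act_const : ∀ X (c : ℝ), act X (fun _ => c) = 0
  bracket : V → V → V
  act_bracket : ∀ X Y f, act (bracket X Y) f = act X (act Y f) - act Y (act X f)

variable {M V : Type*} [AddCommGroup V] [Module (M → ℝ) V]

/-- `D` is a linear connection on vector fields. -/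
def IsConnection (C : VFCalculus M V) (D : V → V → V) : Prop :=
  (∀ X Y Z, D (X + Y) Z = D X Z + D Y Z) ∧
  (∀ (f : M → ℝ) (X Y : V), D (f • X) Y = f • D X Y) ∧
  (∀ X Y Z, D X (Y + Z) = D X Y + D X Z) ∧
  (∀ (f : M → ℝ) (X Y : V), D X (f • Y) = f • D X Y + (C.act X f) • Y)

/-- `D` is torsion-free. -/
def IsTorsionFree (C : VFCalculus M V) (D : V → V → V) : Prop :=
  ∀ X Y, D X Y - D Y X = C.bracket X Y

/-- `g` is a Riemannian metric: symmetric, pointwise nonnegative and definite. -/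
def IsMetric (g : V →ₗ[M → ℝ] V →ₗ[M → ℝ] (M → ℝ)) : Prop :=
  (∀ X Y, g X Y = g Y X) ∧ (∀ (X : V) (x : M), 0 ≤ g X X x) ∧ (∀ X, g X X = 0 → X = 0)

/-- `nab` is the Levi-Civita connection of `g`: a torsion-free metric connection. -/
def IsLeviCivita (C : VFCalculus M V) (g : V →ₗ[M → ℝ] V →ₗ[M → ℝ] (M → ℝ))
    (nab : V → V → V) : Prop :=
  IsConnection C nab ∧ IsTorsionFree C nab ∧
  ∀ X Y Z, C.act X (g Y Z) = g (nab X Y) Z + g Y (nab X Z)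

/-- Exterior derivative of a 1-form. -/
def dOne (C : VFCalculus M V) (ω : V → M → ℝ) (X Y : V) : M → ℝ :=
  C.act X (ω Y) - C.act Y (ω X) - ω (C.bracket X Y)

/-- Covariant derivative `(∇_X ω)(Y)` of a 1-form. -/
def nabOne (C : VFCalculus M V) (nab : V → V → V) (ω : V → M → ℝ) (X Y : V) : M → ℝ :=
  C.act X (ω Y) - ω (nab X Y)

/-- Codifferential of a 1-form, computed with a global orthonormal frame `e`. -/
def codiff (C : VFCalculus M V) (nab : V → V → V) {n : ℕ} (e : Fin n → V)
    (ω : V → M → ℝ) : M → ℝ :=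
  -∑ i, nabOne C nab ω (e i) (e i)

/-- Codifferential of a 2-form, computed with a global orthonormal frame `e`. -/
def codiff2 (C : VFCalculus M V) (nab : V → V → V) {n : ℕ} (e : Fin n → V)
    (ω : V → V → M → ℝ) (Y : V) : M → ℝ :=
  -∑ i, (C.act (e i) (ω (e i) Y) - ω (nab (e i) (e i)) Y - ω (e i) (nab (e i) Y))

/-- Second covariant derivative `(∇²_{X,Z} ω)(Y)` of a 1-form. -/
def secondD (C : VFCalculus M V) (nab : V → V → V) (ω : V → M → ℝ) (X Z Y : V) : M → ℝ :=
  C.act X (nabOne C nab ω Z Y) - nabOne C nab ω (nab X Z) Y - nabOne C nab ω Z (nab X Y)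

/-- Rough (connection) Laplacian `∇*∇` on 1-forms, w.r.t. an orthonormal frame `e`. -/
def roughLap (C : VFCalculus M V) (nab : V → V → V) {n : ℕ} (e : Fin n → V)
    (ω : V → M → ℝ) (Y : V) : M → ℝ :=
  -∑ i, secondD C nab ω (e i) (e i) Y

/-- Curvature tensor of a connection. -/
def Rm (C : VFCalculus M V) (nab : V → V → V) (X Y Z : V) : V :=
  nab X (nab Y Z) - nab Y (nab X Z) - nab (C.bracket X Y) Z

/-- Ricci curvature, computed with a global orthonormal frame `e`. -/
def Ricci (C : VFCalculus M V) (g : V →ₗ[M → ℝ] V →ₗ[M → ℝ] (M → ℝ))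
    (nab : V → V → V) {n : ℕ} (e : Fin n → V) (X Y : V) : M → ℝ :=
  ∑ i, g (Rm C nab (e i) X Y) (e i)

/-- `e` is a global orthonormal frame. -/
def IsONFrame (g : V →ₗ[M → ℝ] V →ₗ[M → ℝ] (M → ℝ)) {n : ℕ} (e : Fin n → V) : Prop :=
  (∀ i j, g (e i) (e j) = fun _ => if i = j then (1 : ℝ) else 0) ∧
  (∀ X : V, X = ∑ i, g X (e i) • e i)

/-- If a Weyl connection `D` preserves the line spanned by a unit vector
field `ξ`, then `∇_X ξ = -θ(ξ) X + g(X,ξ) θ♯`. -/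
theorem unit_field_covariant_derivative
    (C : VFCalculus M V) (g : V →ₗ[M → ℝ] V →ₗ[M → ℝ] (M → ℝ)) (hg : IsMetric g)
    (nab : V → V → V) (hnab : IsLeviCivita C g nab)
    (D : V → V → V) (hD : IsConnection C D) (hDtf : IsTorsionFree C D)
    (θ : V →ₗ[M → ℝ] (M → ℝ))
    (hWeyl : ∀ X Y Z : V, C.act X (g Y Z) - g (D X Y) Z - g Y (D X Z)
      = (fun _ => (-2 : ℝ)) * θ X * g Y Z)
    (θs : V) (hθs : ∀ Y : V, g θs Y = θ Y)
    (ξ : V) (hunit : g ξ ξ = 1)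
    (α : V → M → ℝ) (hpar : ∀ X : V, D X ξ = α X • ξ) :
    ∀ X : V, nab X ξ = -(θ ξ • X) + g X ξ • θs := by
  obtain ⟨hsym, _, hdef⟩ := hg
  obtain ⟨_, htf, hmet⟩ := hnab
  -- symmetry of the difference tensor
  have hAsymm : ∀ X Y : V, D X Y - nab X Y = D Y X - nab Y X := by
    intro X Y
    have h : D X Y - D Y X = nab X Y - nab Y X := by rw [hDtf X Y, htf X Y]
    exact sub_eq_sub_iff_sub_eq_sub.mp h
  have ha1 : ∀ X Y Z : V, g (D X Y - nab X Y) Z + g (D X Z - nab X Z) Y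
      = θ X * g Y Z + θ X * g Y Z := by
    intro X Y Z
    have h1 := hWeyl X Y Z
    have h2 := hmet X Y Z
    funext x
    have h1x := congrFun h1 x
    have h2x := congrFun h2 x
    have hs := congrFun (hsym (D X Z - nab X Z) Y) x
    simp only [map_sub, LinearMap.sub_apply, Pi.sub_apply, Pi.add_apply,
      Pi.mul_apply] at h1x h2x hs ⊢
    linarith
  have ha3 : ∀ X Y Z : V, g (D X Y - nab X Y) Z
      = θ X * g Y Z + θ Y * g X Z - θ Z * g X Y := by
    intro X Y Z
    have e1 := ha1 X Y Z
    have e2 := ha1 Z X Y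
    have e3 := ha1 Y Z X
    rw [hAsymm X Z] at e1
    rw [hAsymm Z Y] at e2
    rw [hAsymm Y X] at e3
    funext x
    have e1x := congrFun e1 x
    have e2x := congrFun e2 x
    have e3x := congrFun e3 x
    have s1 := congrFun (hsym X Y) x
    have s2 := congrFun (hsym Y Z) x
    have s3 := congrFun (hsym X Z) x
    simp only [Pi.add_apply, Pi.sub_apply, Pi.mul_apply] at e1x e2x e3x s1 s2 s3 ⊢
    linear_combination (e1x - e2x + e3x) / 2 - θ Y x * s3
  -- g(∇_X ξ, ξ) = 0
  have hξ0 : ∀ X : V, g (nab X ξ) ξ = 0 := by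
    intro X
    have h := hmet X ξ ξ
    rw [hunit] at h
    have hc : C.act X (1 : M → ℝ) = 0 := C.act_const X 1
    funext x
    have hx := congrFun h x
    have hcx := congrFun hc x
    have hs := congrFun (hsym ξ (nab X ξ)) x
    simp only [Pi.add_apply, Pi.zero_apply] at hx hcx hs ⊢
    linarith
  -- α = θ
  have hαθ : ∀ X : V, α X = θ X := by
    intro X
    have h := ha3 X ξ ξ
    rw [show D X ξ - nab X ξ = α X • ξ - nab X ξ by rw [hpar X]] at h
    funext x
    have hx := congrFun h x
    have hu := congrFun hunit x
    have h0 := congrFun (hξ0 X) x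
    simp only [map_sub, map_smul, LinearMap.sub_apply, LinearMap.smul_apply,
      smul_eq_mul, Pi.sub_apply, Pi.add_apply, Pi.mul_apply, Pi.zero_apply,
      Pi.one_apply] at hx hu h0 ⊢
    nlinarith [hx, hu, h0]
  intro X
  have hWZ : ∀ Z : V, g (nab X ξ - (-(θ ξ • X) + g X ξ • θs)) Z = 0 := by
    intro Z
    have h := ha3 X ξ Z
    rw [show D X ξ - nab X ξ = α X • ξ - nab X ξ by rw [hpar X]] at h
    funext x
    have hx := congrFun h x
    have hα := congrFun (hαθ X) x
    have hθZ := congrFun (hθs Z) x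
    have hs := congrFun (hsym ξ Z) x
    simp only [map_sub, map_add, map_smul, map_neg, LinearMap.sub_apply,
      LinearMap.add_apply, LinearMap.smul_apply, LinearMap.neg_apply,
      smul_eq_mul, Pi.sub_apply, Pi.add_apply, Pi.mul_apply, Pi.neg_apply,
      Pi.zero_apply] at hx hα hθZ hs ⊢
    linear_combination (-1 : ℝ) * hx + (g ξ) Z x * hα - (g X) ξ x * hθZ
  have hW : nab X ξ - (-(θ ξ • X) + g X ξ • θs) = 0 :=
    hdef _ (hWZ _)
  exact sub_eq_zero.mp hW
end

section
/- Let (M,g) be an Einstein manifold of dimension n ≥ 3 with Einstein constant λ, carrying a unit vector field ξ satisfying ∇_X ξ = -θ(ξ)X + g(X,ξ)θ^♯ for a 1-form θ. Then λ = (n-2)ξ(θ(ξ)) - δθ. -/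
open scoped BigOperators

variable {M V : Type*} [AddCommGroup V] [Module (M → ℝ) V]

lemma VFCalculus.act_zero_left (C : VFCalculus M V) (f : M → ℝ) : C.act 0 f = 0 := by
  have h := C.act_add_left 0 0 f
  rw [add_zero] at h
  have h2 : C.act 0 f + 0 = C.act 0 f + C.act 0 f := by rw [add_zero]; exact h
  exact (add_left_cancel h2).symm

lemma VFCalculus.act_sum (C : VFCalculus M V) {ι : Type*} (s : Finset ι)
    (c : ι → M → ℝ) (w : ι → V) (f : M → ℝ) :
    C.act (∑ i ∈ s, c i • w i) f = ∑ i ∈ s, c i * C.act (w i) f := by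
  classical
  induction s using Finset.induction_on with
  | empty => simp [C.act_zero_left]
  | insert _ _ h ih =>
      rw [Finset.sum_insert h, Finset.sum_insert h, C.act_add_left, C.act_smul_left, ih]

/-- On an Einstein manifold (`Ric = λ g`, `n ≥ 3`) with a unit field `ξ`
satisfying `∇_X ξ = -θ(ξ)X + g(X,ξ)θ♯`, one has `λ = (n-2) ξ(θ(ξ)) - δθ`. -/
theorem einstein_constant_formula
    (C : VFCalculus M V) (g : V →ₗ[M → ℝ] V →ₗ[M → ℝ] (M → ℝ)) (hg : IsMetric g)
    (nab : V → V → V) (hnab : IsLeviCivita C g nab)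
    (θ : V →ₗ[M → ℝ] (M → ℝ)) (θs : V) (hθs : ∀ Y : V, g θs Y = θ Y)
    (ξ : V) (hunit : g ξ ξ = 1)
    (hxi : ∀ X : V, nab X ξ = -(θ ξ • X) + g X ξ • θs)
    {n : ℕ} (hn : 3 ≤ n) (e : Fin n → V) (he : IsONFrame g e)
    (lam : ℝ)
    (heins : ∀ X Y : V, Ricci C g nab e X Y = (fun _ => lam) * g X Y) :
    (fun _ : M => lam)
      = (fun _ => (n : ℝ) - 2) * C.act ξ (θ ξ) - codiff C nab e (fun Y => θ Y) := by
  obtain ⟨hsym, -, -⟩ := hg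
  obtain ⟨⟨hD1, hD2, hD3, hD4⟩, htf, hcomp⟩ := hnab
  obtain ⟨hon, hframe⟩ := he
  -- derived connection rules
  have hDzero : ∀ X, nab X 0 = 0 := by
    intro X
    have h := hD3 X 0 0
    rw [add_zero] at h
    have h2 : nab X 0 + 0 = nab X 0 + nab X 0 := by rw [add_zero]; exact h
    exact (add_left_cancel h2).symm
  have hDneg : ∀ X Y, nab X (-Y) = -(nab X Y) := by
    intro X Y
    have h := hD3 X Y (-Y)
    rw [add_neg_cancel, hDzero] at h
    exact (neg_eq_of_add_eq_zero_right h.symm).symm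
  have hDsub : ∀ X Y Z, nab X (Y - Z) = nab X Y - nab X Z := by
    intro X Y Z
    rw [sub_eq_add_neg, hD3, hDneg, sub_eq_add_neg]
  have hgθs : ∀ Y : V, g Y θs = θ Y := fun Y => by rw [hsym Y θs, hθs]
  have hA : nab ξ ξ = -(θ ξ • ξ) + θs := by rw [hxi, hunit, one_smul]
  -- g(∇_ξ X, ξ) in scalar form
  have hcomp'' : ∀ X, g (nab ξ X) ξ = C.act ξ (g X ξ) + θ ξ * g X ξ - θ X := by
    intro X
    have h := hcomp ξ X ξ
    rw [hA] at h
    simp only [map_add, map_neg, map_smul, smul_eq_mul, hgθs] at h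
    linear_combination -h
  -- the curvature formula
  have hRm : ∀ X, Rm C nab X ξ ξ
      = -(C.act X (θ ξ) • ξ) + nab X θs + C.act ξ (θ ξ) • X
        - g X ξ • nab ξ θs - g X (nab ξ ξ) • θs := by
    intro X
    unfold Rm
    rw [← htf X ξ]
    rw [hxi (nab X ξ - nab ξ X)]
    rw [hA]
    simp only [hxi, hDsub, hD3, hDneg, hD4]
    simp only [map_add, map_sub, map_neg, map_smul, LinearMap.add_apply, LinearMap.sub_apply,
      LinearMap.neg_apply, LinearMap.smul_apply, smul_eq_mul, hθs, hgθs, hcomp'']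
    module
  -- frame expansion lemmas
  have hact_frame : ∀ (X : V) (f : M → ℝ), C.act X f = ∑ i, g X (e i) * C.act (e i) f := by
    intro X f
    conv_lhs => rw [hframe X]
    rw [C.act_sum]
  have hlin_frame : ∀ (L : V →ₗ[M → ℝ] (M → ℝ)) (X : V), L X = ∑ i, g X (e i) * L (e i) := by
    intro L X
    conv_lhs => rw [hframe X]
    rw [map_sum]
    simp only [map_smul, smul_eq_mul]
  -- divergence term
  have hS2 : ∀ i, g (nab (e i) θs) (e i) = nabOne C nab (fun Y => θ Y) (e i) (e i) := by
    intro i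
    have h := hcomp (e i) θs (e i)
    rw [hθs, hθs] at h
    unfold nabOne
    linear_combination -h
  have h6 : g (nab ξ θs) ξ = C.act ξ (θ ξ) - θ (nab ξ ξ) := by
    have h := hcomp ξ θs ξ
    rw [hθs, hθs] at h
    linear_combination -h
  -- the trace computation
  have key : Ricci C g nab e ξ ξ
      = (fun _ => (n : ℝ) - 2) * C.act ξ (θ ξ) - codiff C nab e (fun Y => θ Y) := by
    unfold Ricci
    simp only [hRm]
    simp only [map_add, map_sub, map_neg, map_smul, LinearMap.add_apply, LinearMap.sub_apply,
      LinearMap.neg_apply, LinearMap.smul_apply, smul_eq_mul, hθs]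
    rw [Finset.sum_sub_distrib, Finset.sum_sub_distrib, Finset.sum_add_distrib,
      Finset.sum_add_distrib]
    have h1 : ∑ i, -(C.act (e i) (θ ξ) * g ξ (e i)) = -C.act ξ (θ ξ) := by
      rw [Finset.sum_neg_distrib, hact_frame ξ (θ ξ)]
      exact congrArg Neg.neg (Finset.sum_congr rfl fun i _ => mul_comm _ _)
    have h2 : ∑ i, g (nab (e i) θs) (e i) = -codiff C nab e (fun Y => θ Y) := by
      simp only [hS2]
      unfold codiff
      rw [neg_neg]
    have h3 : ∑ i, C.act ξ (θ ξ) * g (e i) (e i) = (fun _ => (n : ℝ)) * C.act ξ (θ ξ) := by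
      have hee : ∀ i : Fin n, g (e i) (e i) = fun _ => (1 : ℝ) := fun i => by
        rw [hon i i]; simp
      simp only [hee]
      rw [Finset.sum_const, Finset.card_univ, Fintype.card_fin]
      funext x
      simp [mul_comm]
    have h4 : ∑ i, g (e i) ξ * g (nab ξ θs) (e i) = g (nab ξ θs) ξ := by
      rw [hlin_frame (g (nab ξ θs)) ξ]
      exact Finset.sum_congr rfl fun i _ => by rw [hsym (e i) ξ]
    have h5 : ∑ i, g (e i) (nab ξ ξ) * θ (e i) = θ (nab ξ ξ) := by
      rw [hlin_frame θ (nab ξ ξ)]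
      exact Finset.sum_congr rfl fun i _ => by rw [hsym (e i) (nab ξ ξ)]
    rw [h1, h2, h3, h4, h5, h6]
    funext x
    simp only [Pi.add_apply, Pi.sub_apply, Pi.neg_apply, Pi.mul_apply]
    ring
  have hfin := heins ξ ξ
  rw [hunit, mul_one, key] at hfin
  exact hfin.symm
end

section
/- Let (M,g) be a compact Einstein manifold of dimension n ≥ 3 with Einstein constant λ, carrying a unit vector field ξ satisfying ∇_X ξ = -θ(ξ)X + g(X,ξ)θ^♯ for a 1-form θ. Then λ ≥ 0. -/
open scoped BigOperators

variable {M V : Type*} [AddCommGroup V] [Module (M → ℝ) V]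

/-- On a compact Einstein manifold of dimension `n ≥ 3` with such a unit
field `ξ`, the Einstein constant is nonnegative. Compactness is encoded by the
integration functional `intg` together with the divergence theorem. -/
theorem einstein_constant_nonneg
    (C : VFCalculus M V) (g : V →ₗ[M → ℝ] V →ₗ[M → ℝ] (M → ℝ)) (hg : IsMetric g)
    (nab : V → V → V) (hnab : IsLeviCivita C g nab)
    (θ : V →ₗ[M → ℝ] (M → ℝ)) (θs : V) (hθs : ∀ Y : V, g θs Y = θ Y)
    (ξ : V) (hunit : g ξ ξ = 1)
    (hxi : ∀ X : V, nab X ξ = -(θ ξ • X) + g X ξ • θs)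
    {n : ℕ} (hn : 3 ≤ n) (e : Fin n → V) (he : IsONFrame g e)
    (intg : (M → ℝ) →ₗ[ℝ] ℝ)
    (hstokes : ∀ ω : V → M → ℝ, (∀ X Y : V, ω (X + Y) = ω X + ω Y) →
      (∀ (f : M → ℝ) (X : V), ω (f • X) = f * ω X) → intg (codiff C nab e ω) = 0)
    (hmono : ∀ f₁ f₂ : M → ℝ, (∀ x, f₁ x ≤ f₂ x) → intg f₁ ≤ intg f₂)
    (hvol : 0 < intg 1)
    (lam : ℝ)
    (heins : ∀ X Y : V, Ricci C g nab e X Y = (fun _ => lam) * g X Y) :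
    0 ≤ lam := by
  classical
  obtain ⟨hgsymm, hgpos, -⟩ := hg
  obtain ⟨⟨hD1, hD2, hD3, hD4⟩, hTF, hM⟩ := hnab
  obtain ⟨heo, hex⟩ := he
  -- basic lemmas about the derivation and the connection
  have hact0 : ∀ u : M → ℝ, C.act (0 : V) u = 0 := by
    intro u
    have h := C.act_add_left 0 0 u
    rw [add_zero] at h
    exact left_eq_add.mp h
  have hactsum : ∀ (s : Finset (Fin n)) (Z : Fin n → V) (u : M → ℝ),
      C.act (∑ i ∈ s, Z i) u = ∑ i ∈ s, C.act (Z i) u := by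
    intro s
    induction s using Finset.cons_induction with
    | empty => intro Z u; simpa using hact0 u
    | cons a s ha ih =>
      intro Z u
      rw [Finset.sum_cons, Finset.sum_cons, C.act_add_left, ih]
  have hactframe : ∀ (X : V) (u : M → ℝ),
      C.act X u = ∑ i, g X (e i) * C.act (e i) u := by
    intro X u
    conv_lhs => rw [hex X]
    rw [hactsum]
    exact Finset.sum_congr rfl fun i _ => C.act_smul_left _ _ _
  have hnab0 : ∀ X : V, nab X (0 : V) = 0 := by
    intro X
    have h := hD3 X 0 0
    rw [add_zero] at h
    exact left_eq_add.mp h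
  have hnabneg : ∀ X Y : V, nab X (-Y) = -(nab X Y) := by
    intro X Y
    have h : nab X Y + nab X (-Y) = 0 := by
      rw [← hD3, add_neg_cancel, hnab0]
    exact (neg_eq_of_add_eq_zero_right h).symm
  have hθs2 : ∀ Y : V, g Y θs = θ Y := by
    intro Y; rw [hgsymm]; exact hθs Y
  -- frame expansion of the metric
  have hgframe : ∀ X Y : V, ∑ i, g X (e i) * g (e i) Y = g X Y := by
    intro X Y
    conv_rhs => rw [hex X]
    rw [map_sum, LinearMap.sum_apply]
    exact Finset.sum_congr rfl fun i _ => by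
      simp [map_smul, smul_eq_mul]
  -- key curvature computation
  have hca : ∀ X : V, C.act ξ (g X ξ) = g (nab ξ X) ξ + (θ X - θ ξ * g X ξ) := by
    intro X
    have h := hM ξ X ξ
    rw [hxi ξ, hunit, one_smul] at h
    have h2 : g X (-(θ ξ • ξ) + θs) = θ X - θ ξ * g X ξ := by
      simp only [map_add, map_neg, map_smul, smul_eq_mul, hθs2, hunit]
      ring
    rw [h2] at h
    exact h
  have hRg : ∀ X Y : V, g (Rm C nab X ξ ξ) Y =
      C.act ξ (θ ξ) * g X Y - C.act X (θ ξ) * g ξ Y + g (nab X θs) Y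
        - g X ξ * g (nab ξ θs) Y + (θ ξ * g X ξ - θ X) * θ Y := by
    intro X Y
    have hTF' : ∀ A B : V, nab A B - nab B A = C.bracket A B := hTF
    rw [Rm, ← hTF' X ξ]
    simp only [hxi, hunit, one_smul, hD3, hnabneg, hD4]
    simp only [map_add, map_sub, map_neg, map_smul, LinearMap.add_apply,
      LinearMap.sub_apply, LinearMap.neg_apply, LinearMap.smul_apply,
      smul_eq_mul, hθs, hunit]
    rw [hca X]
    ring
  -- pointwise sum identities
  have hsum_ee : ∀ x : M, ∑ i, g (e i) (e i) x = (n : ℝ) := by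
    intro x
    have : ∀ i : Fin n, g (e i) (e i) x = 1 := by
      intro i; rw [heo i i]; simp
    simp [this]
  have hsum_act : ∀ (u : M → ℝ) (x : M),
      ∑ i, g ξ (e i) x * C.act (e i) u x = C.act ξ u x := by
    intro u x
    have h := congrFun (hactframe ξ u) x
    rw [Finset.sum_apply] at h
    simpa [Pi.mul_apply] using h.symm
  have hsum_g : ∀ (X Y : V) (x : M), ∑ i, g X (e i) x * g (e i) Y x = g X Y x := by
    intro X Y x
    have h := congrFun (hgframe X Y) x
    rw [Finset.sum_apply] at h
    simpa [Pi.mul_apply] using h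
  have hsθ : ∀ x : M, ∑ i, g (e i) ξ x * θ (e i) x = θ ξ x := by
    intro x
    rw [← hθs ξ, ← hsum_g θs ξ x]
    refine Finset.sum_congr rfl fun i _ => ?_
    rw [hθs (e i)]
    ring
  have hsθθ : ∀ x : M, ∑ i, θ (e i) x * θ (e i) x = θ θs x := by
    intro x
    rw [← hθs θs, ← hsum_g θs θs x]
    refine Finset.sum_congr rfl fun i _ => ?_
    rw [hθs (e i), hgsymm (e i) θs, hθs (e i)]
  have hT3 : ∀ i : Fin n, g (nab (e i) θs) (e i)
      = C.act (e i) (θ (e i)) - θ (nab (e i) (e i)) := by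
    intro i
    have h := hM (e i) θs (e i)
    simp only [hθs] at h
    linear_combination -h
  have hT4 : g (nab ξ θs) ξ = C.act ξ (θ ξ) + θ ξ * θ ξ - θ θs := by
    have h := hM ξ θs ξ
    rw [hxi ξ, hunit, one_smul] at h
    simp only [map_add, map_neg, map_smul, smul_eq_mul, hθs] at h
    linear_combination -h
  -- the main pointwise identity : lam = (n-2) ξ(θξ) - δθ
  have key : ∀ x : M, lam = ((n:ℝ) - 2) * C.act ξ (θ ξ) x
      - codiff C nab e (fun Z : V => θ Z) x := by
    intro x
    have h := congrFun (heins ξ ξ) x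
    rw [hunit] at h
    have hl : Ricci C g nab e ξ ξ x = ∑ i, (g (Rm C nab (e i) ξ ξ) (e i)) x := by
      rw [Ricci]; exact Finset.sum_apply _ _ _
    have hterm : ∀ i : Fin n, (g (Rm C nab (e i) ξ ξ) (e i)) x =
        C.act ξ (θ ξ) x * g (e i) (e i) x - C.act (e i) (θ ξ) x * g ξ (e i) x
          + g (nab (e i) θs) (e i) x - g (e i) ξ x * g (nab ξ θs) (e i) x
          + (θ ξ x * g (e i) ξ x - θ (e i) x) * θ (e i) x := by
      intro i
      have := congrFun (hRg (e i) (e i)) x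
      simpa [Pi.mul_apply, Pi.add_apply, Pi.sub_apply] using this
    rw [hl, Finset.sum_congr rfl (fun i _ => hterm i)] at h
    simp only [Finset.sum_add_distrib, Finset.sum_sub_distrib] at h
    -- evaluate the five sums
    have s1 : ∑ i, C.act ξ (θ ξ) x * g (e i) (e i) x = (n:ℝ) * C.act ξ (θ ξ) x := by
      rw [← Finset.mul_sum, hsum_ee]; ring
    have s2 : ∑ i, C.act (e i) (θ ξ) x * g ξ (e i) x = C.act ξ (θ ξ) x := by
      rw [← hsum_act (θ ξ) x]
      exact Finset.sum_congr rfl fun i _ => mul_comm _ _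
    have s3 : ∑ i, g (nab (e i) θs) (e i) x
        = -(codiff C nab e (fun Z : V => θ Z) x) := by
      have hc : codiff C nab e (fun Z : V => θ Z) x
          = -∑ i, (C.act (e i) (θ (e i)) x - θ (nab (e i) (e i)) x) := by
        rw [codiff]
        simp [nabOne, Finset.sum_apply, Pi.sub_apply]
      rw [hc, neg_neg]
      exact Finset.sum_congr rfl fun i _ => by
        rw [hT3 i]; simp [Pi.sub_apply]
    have s4 : ∑ i, g (e i) ξ x * g (nab ξ θs) (e i) x
        = C.act ξ (θ ξ) x + θ ξ x * θ ξ x - θ θs x := by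
      have h1 : ∑ i, g (e i) ξ x * g (nab ξ θs) (e i) x = g (nab ξ θs) ξ x := by
        rw [← hsum_g (nab ξ θs) ξ x]
        exact Finset.sum_congr rfl fun i _ => by
          rw [hgsymm (e i) ξ]; ring
      rw [h1]
      have := congrFun hT4 x
      simpa [Pi.add_apply, Pi.sub_apply, Pi.mul_apply] using this
    have s5a := hsθ x
    have s5b := hsθθ x
    have s5 : ∑ i, (θ ξ x * g (e i) ξ x - θ (e i) x) * θ (e i) x
        = θ ξ x * θ ξ x - θ θs x := by
      have : ∀ i : Fin n, (θ ξ x * g (e i) ξ x - θ (e i) x) * θ (e i) x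
          = θ ξ x * (g (e i) ξ x * θ (e i) x) - θ (e i) x * θ (e i) x := by
        intro i; ring
      rw [Finset.sum_congr rfl fun i _ => this i, Finset.sum_sub_distrib,
        ← Finset.mul_sum, s5a, s5b]
    rw [s1, s2, s3, s4, s5] at h
    simp only [Pi.mul_apply, Pi.one_apply, mul_one] at h
    linarith [h]
  -- integrate δθ
  have hθint : intg (codiff C nab e (fun Z : V => θ Z)) = 0 := by
    apply hstokes
    · intro X Y; simp [map_add]
    · intro u X; simp [map_smul, smul_eq_mul]
  -- integrate the divergence of (θ ξ) · ξ♭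
  have hcod : codiff C nab e (fun Z : V => θ ξ * g Z ξ)
      = fun x => ((n:ℝ) - 1) * (θ ξ x * θ ξ x) - C.act ξ (θ ξ) x := by
    funext x
    have hterm : ∀ i : Fin n,
        (C.act (e i) (θ ξ * g (e i) ξ) - θ ξ * g (nab (e i) (e i)) ξ) x
          = θ ξ x * (-(θ ξ x * g (e i) (e i) x) + g (e i) ξ x * θ (e i) x)
            + g (e i) ξ x * C.act (e i) (θ ξ) x := by
      intro i
      have h1 : C.act (e i) (θ ξ * g (e i) ξ)
          = θ ξ * C.act (e i) (g (e i) ξ) + g (e i) ξ * C.act (e i) (θ ξ) :=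
        C.act_mul _ _ _
      have h2 : C.act (e i) (g (e i) ξ)
          = g (nab (e i) (e i)) ξ + g (e i) (nab (e i) ξ) := hM _ _ _
      have h3 : g (e i) (nab (e i) ξ)
          = -(θ ξ * g (e i) (e i)) + g (e i) ξ * θ (e i) := by
        rw [hxi (e i)]
        simp only [map_add, map_neg, map_smul, smul_eq_mul, hθs2]
      rw [h1, h2, h3]
      simp only [Pi.add_apply, Pi.sub_apply, Pi.mul_apply, Pi.neg_apply]
      ring
    rw [codiff]
    simp only [nabOne, Pi.neg_apply, Finset.sum_apply]
    rw [Finset.sum_congr rfl (fun i _ => hterm i)]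
    have hs1 : ∑ i, (θ ξ x * (-(θ ξ x * g (e i) (e i) x) + g (e i) ξ x * θ (e i) x)
        + g (e i) ξ x * C.act (e i) (θ ξ) x)
        = θ ξ x * (-(θ ξ x * (n:ℝ)) + θ ξ x) + C.act ξ (θ ξ) x := by
      rw [Finset.sum_add_distrib, ← Finset.mul_sum]
      congr 1
      · congr 1
        rw [Finset.sum_add_distrib]
        congr 1
        · rw [Finset.sum_neg_distrib, ← Finset.mul_sum, hsum_ee]
        · exact hsθ x
      · rw [← hsum_act (θ ξ) x]
        exact Finset.sum_congr rfl fun i _ => by rw [hgsymm (e i) ξ]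
    rw [hs1]
    ring
  have hdiv : intg (codiff C nab e (fun Z : V => θ ξ * g Z ξ)) = 0 := by
    apply hstokes
    · intro X Y
      have : g (X + Y) ξ = g X ξ + g Y ξ := by simp [map_add]
      rw [this]; ring
    · intro u X
      have : g (u • X) ξ = u * g X ξ := by simp [map_smul, smul_eq_mul]
      rw [this]; ring
  -- turn everything into real inequalities
  set F : M → ℝ := C.act ξ (θ ξ) with hF
  set G : M → ℝ := fun x => θ ξ x * θ ξ x with hG
  have hGnn : 0 ≤ intg G := by
    have h0 : intg (0 : M → ℝ) = 0 := map_zero intg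
    have := hmono 0 G (fun x => by simpa using mul_self_nonneg (θ ξ x))
    rwa [h0] at this
  have hFval : intg F = ((n:ℝ) - 1) * intg G := by
    have hsplit : codiff C nab e (fun Z : V => θ ξ * g Z ξ)
        = ((n:ℝ) - 1) • G - F := by
      rw [hcod]
      funext x
      simp [hG, hF, Pi.sub_apply, Pi.smul_apply, smul_eq_mul]
    rw [hsplit] at hdiv
    rw [map_sub, map_smul, smul_eq_mul] at hdiv
    linarith
  have hlamfun : (fun _ : M => lam) = ((n:ℝ) - 2) • F - codiff C nab e (fun Z : V => θ Z) := by
    funext x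
    simp only [Pi.sub_apply, Pi.smul_apply, smul_eq_mul]
    exact key x
  have hlamint : lam * intg 1 = ((n:ℝ) - 2) * intg F := by
    have h1 : intg (fun _ : M => lam) = lam * intg 1 := by
      have : (fun _ : M => lam) = lam • (1 : M → ℝ) := by
        funext x; simp
      rw [this, map_smul, smul_eq_mul]
    rw [← h1, hlamfun, map_sub, map_smul, smul_eq_mul, hθint, sub_zero]
  have hn3 : (3:ℝ) ≤ (n:ℝ) := by exact_mod_cast hn
  have hfin : 0 ≤ lam * intg 1 := by
    rw [hlamint, hFval]
    have h1 : (0:ℝ) ≤ (n:ℝ) - 2 := by linarith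
    have h2 : (0:ℝ) ≤ (n:ℝ) - 1 := by linarith
    positivity
  by_contra hlt
  push_neg at hlt
  nlinarith [hvol, hfin]
end

section
/- Let (M,g) be an n-dimensional Riemannian manifold (n ≥ 3) with unit vector field ξ and 1-form θ satisfying ∇_X ξ = -θ(ξ)X + g(X,ξ)θ^♯, and suppose g is Einstein with constant λ. If the 1-form (θ(ξ))θ - d(θ(ξ)) is proportional to ξ^♭ wherever defined (i.e. ξ^♭ ∧ ((θ(ξ))θ - d(θ(ξ))) = 0), then combining with the Bochner formula one has ξ^♭ ∧ d(θ(ξ)) = 0 and hence θ(ξ)·(θ ∧ ξ^♭) = 0. -/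
open scoped BigOperators

variable {M V : Type*} [AddCommGroup V] [Module (M → ℝ) V]

/-- If `ξ♭ ∧ (θ(ξ)θ - d(θ(ξ))) = 0` on an Einstein manifold with the
rank-one structure, then (via the Bochner formula) `ξ♭ ∧ d(θ(ξ)) = 0` and hence
`θ(ξ)·(θ ∧ ξ♭) = 0`. -/
theorem bochner_consequence
    (C : VFCalculus M V) (g : V →ₗ[M → ℝ] V →ₗ[M → ℝ] (M → ℝ)) (hg : IsMetric g)
    (nab : V → V → V) (hnab : IsLeviCivita C g nab)
    (θ : V →ₗ[M → ℝ] (M → ℝ)) (θs : V) (hθs : ∀ Y : V, g θs Y = θ Y)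
    (ξ : V) (hunit : g ξ ξ = 1)
    (hxi : ∀ X : V, nab X ξ = -(θ ξ • X) + g X ξ • θs)
    {n : ℕ} (hn : 3 ≤ n) (e : Fin n → V) (he : IsONFrame g e)
    (lam : ℝ)
    (heins : ∀ X Y : V, Ricci C g nab e X Y = (fun _ => lam) * g X Y)
    (hprop : ∀ X Y : V,
      g ξ X * (θ ξ * θ Y - C.act Y (θ ξ)) - g ξ Y * (θ ξ * θ X - C.act X (θ ξ)) = 0) :
    (∀ X Y : V, g ξ X * C.act Y (θ ξ) - g ξ Y * C.act X (θ ξ) = 0) ∧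
    (∀ X Y : V, θ ξ * (θ X * g ξ Y - θ Y * g ξ X) = 0) := by
  classical
  obtain ⟨gsymm, -, -⟩ := hg
  obtain ⟨⟨cadd1, csmul1, cadd2, cleib⟩, ctf, cmet⟩ := hnab
  -- basic facts about the derivation `act`
  have hact0 : ∀ u : M → ℝ, C.act 0 u = 0 := by
    intro u
    have h := C.act_smul_left 0 ξ u
    simpa using h
  have hact_sum : ∀ (u : M → ℝ) (h : Fin n → M → ℝ) (s : Finset (Fin n)),
      C.act (∑ i ∈ s, h i • e i) u = ∑ i ∈ s, h i * C.act (e i) u := by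
    intro u h s
    induction s using Finset.induction_on with
    | empty => simpa using hact0 u
    | @insert a s ha ih =>
        rw [Finset.sum_insert ha, Finset.sum_insert ha, C.act_add_left,
          C.act_smul_left, ih]
  have hframe_act : ∀ (X : V) (u : M → ℝ),
      C.act X u = ∑ i, g X (e i) * C.act (e i) u := by
    intro X u
    conv_lhs => rw [he.2 X]
    exact hact_sum u _ _
  have hgθ : ∀ Y : V, g Y θs = θ Y := fun Y => (gsymm Y θs).trans (hθs Y)
  -- basic facts about the connection
  have hnab_zero : ∀ X : V, nab X 0 = 0 := by
    intro X
    have h := cleib (0 : M → ℝ) X ξ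
    rw [zero_smul] at h
    have h0 : C.act X (0 : M → ℝ) = 0 := C.act_const X 0
    rw [h, h0, zero_smul, zero_smul, zero_add]
  have hnab_neg : ∀ X Y : V, nab X (-Y) = -nab X Y := by
    intro X Y
    have h := cadd2 X Y (-Y)
    rw [add_neg_cancel, hnab_zero] at h
    exact (neg_eq_of_add_eq_zero_right h.symm).symm
  have hnab_neg1 : ∀ X Y : V, nab (-X) Y = -nab X Y := by
    intro X Y
    have h := csmul1 (-1 : M → ℝ) X Y
    rw [neg_one_smul, neg_one_smul] at h
    exact h
  have hnab_sub1 : ∀ X Y Z : V, nab (X - Y) Z = nab X Z - nab Y Z := by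
    intro X Y Z
    rw [sub_eq_add_neg, cadd1, hnab_neg1, ← sub_eq_add_neg]
  -- frame decompositions
  have hframe_g : ∀ W : V, g W ξ = ∑ i, g W (e i) * g (e i) ξ := by
    intro W
    conv_lhs => rw [he.2 W]
    rw [map_sum, LinearMap.sum_apply]
    refine Finset.sum_congr rfl fun i _ => ?_
    rw [map_smul, LinearMap.smul_apply, smul_eq_mul]
  have hθ_sum : ∀ W : V, θ W = ∑ i, g W (e i) * θ (e i) := by
    intro W
    conv_lhs => rw [he.2 W]
    rw [map_sum]
    refine Finset.sum_congr rfl fun i _ => ?_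
    rw [map_smul, smul_eq_mul]
  -- derivative of g · ξ
  have hactg : ∀ Z X : V, C.act Z (g X ξ)
      = g (nab Z X) ξ + (g Z ξ * θ X - θ ξ * g X Z) := by
    intro Z X
    rw [cmet Z X ξ, hxi Z, map_add, map_neg, map_smul, map_smul, smul_eq_mul,
      smul_eq_mul, hgθ]
    ring
  -- derivative of θ ξ via nab θs
  have hnabθ : ∀ X : V, g (nab X θs) ξ
      = C.act X (θ ξ) + θ ξ * θ X - g X ξ * θ θs := by
    intro X
    have h := cmet X θs ξ
    rw [hθs ξ, hxi X, map_add, map_neg, map_smul, map_smul, smul_eq_mul,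
      smul_eq_mul, hθs, hθs] at h
    linear_combination -h
  -- curvature with ξ in the last slot
  have hRm : ∀ Z X : V, Rm C nab Z X ξ
      = C.act X (θ ξ) • Z - C.act Z (θ ξ) • X + g X ξ • nab Z θs
        - g Z ξ • nab X θs + (g Z ξ * θ X - g X ξ * θ Z) • θs := by
    intro Z X
    have hb : C.bracket Z X = nab Z X - nab X Z := (ctf Z X).symm
    unfold Rm
    rw [hb, hnab_sub1]
    simp only [hxi]
    simp only [cadd2, hnab_neg, cleib]
    simp only [hactg]
    rw [gsymm Z X]
    module
  -- the Ricci curvature in the direction ξ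
  have hRic : ∀ X : V, Ricci C g nab e X ξ
      = (n : M → ℝ) * C.act X (θ ξ) - C.act X (θ ξ)
        + g X ξ * (∑ i, g (nab (e i) θs) (e i))
        - (C.act X (θ ξ) + θ ξ * θ X - g X ξ * θ θs)
        + (θ ξ * θ X - g X ξ * θ θs) := by
    intro X
    have hterm : ∀ i : Fin n, g (Rm C nab (e i) X ξ) (e i)
        = C.act X (θ ξ) * g (e i) (e i) - C.act (e i) (θ ξ) * g X (e i)
          + g X ξ * g (nab (e i) θs) (e i) - g (e i) ξ * g (nab X θs) (e i)
          + (g (e i) ξ * θ X - g X ξ * θ (e i)) * θ (e i) := by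
      intro i
      rw [hRm]
      simp only [map_add, map_sub, map_smul, LinearMap.add_apply,
        LinearMap.sub_apply, LinearMap.smul_apply, smul_eq_mul, hgθ, hθs]
    have hgee : ∀ i : Fin n, g (e i) (e i) = 1 := by
      intro i
      rw [he.1 i i]
      funext x
      simp
    unfold Ricci
    simp only [hterm]
    simp only [Finset.sum_add_distrib, Finset.sum_sub_distrib]
    have hS1 : ∑ i, C.act X (θ ξ) * g (e i) (e i) = (n : M → ℝ) * C.act X (θ ξ) := by
      simp only [hgee, mul_one]
      rw [Finset.sum_const, Finset.card_univ, Fintype.card_fin, nsmul_eq_mul]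
    have hS2 : ∑ i, C.act (e i) (θ ξ) * g X (e i) = C.act X (θ ξ) := by
      rw [hframe_act X (θ ξ)]
      exact Finset.sum_congr rfl fun i _ => mul_comm _ _
    have hS4 : ∑ i, g (e i) ξ * g (nab X θs) (e i) = g (nab X θs) ξ := by
      rw [hframe_g (nab X θs)]
      exact Finset.sum_congr rfl fun i _ => mul_comm _ _
    have hS5 : ∑ i, (g (e i) ξ * θ X - g X ξ * θ (e i)) * θ (e i)
        = θ ξ * θ X - g X ξ * θ θs := by
      have h1 : ∑ i, g (e i) ξ * θ X * θ (e i) = θ ξ * θ X := by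
        rw [hθ_sum ξ, Finset.sum_mul]
        refine Finset.sum_congr rfl fun i _ => ?_
        rw [gsymm ξ (e i)]
        ring
      have h2 : ∑ i, g X ξ * θ (e i) * θ (e i) = g X ξ * θ θs := by
        rw [hθ_sum θs, Finset.mul_sum]
        refine Finset.sum_congr rfl fun i _ => ?_
        rw [hθs (e i)]
        ring
      calc ∑ i, (g (e i) ξ * θ X - g X ξ * θ (e i)) * θ (e i)
          = ∑ i, (g (e i) ξ * θ X * θ (e i) - g X ξ * θ (e i) * θ (e i)) := by
            refine Finset.sum_congr rfl fun i _ => ?_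
            ring
        _ = (∑ i, g (e i) ξ * θ X * θ (e i)) - ∑ i, g X ξ * θ (e i) * θ (e i) :=
            Finset.sum_sub_distrib _ _
        _ = θ ξ * θ X - g X ξ * θ θs := by rw [h1, h2]
    rw [hS1, hS2, hS4, hS5, ← Finset.mul_sum, hnabθ]
  -- the key identity : (n-2) dθξ = (λ - δ-type term) ξ♭
  have hkey : ∀ (X : V) (x : M), ((n : ℝ) - 2) * C.act X (θ ξ) x
      = g X ξ x * (lam - (∑ i, g (nab (e i) θs) (e i)) x) := by
    intro X x
    have h := heins X ξ
    rw [hRic X] at h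
    have h2 := congrFun h x
    simp only [Pi.add_apply, Pi.sub_apply, Pi.mul_apply, Pi.natCast_apply] at h2
    linear_combination h2
  have hn2 : ((n : ℝ) - 2) ≠ 0 := by
    have h3 : (3 : ℝ) ≤ (n : ℝ) := by exact_mod_cast hn
    linarith
  have hgoal1 : ∀ X Y : V, g ξ X * C.act Y (θ ξ) - g ξ Y * C.act X (θ ξ) = 0 := by
    intro X Y
    funext x
    simp only [Pi.sub_apply, Pi.mul_apply, Pi.zero_apply]
    have hX := hkey X x
    have hY := hkey Y x
    have hsX : g ξ X = g X ξ := gsymm ξ X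
    have hsY : g ξ Y = g Y ξ := gsymm ξ Y
    rw [hsX, hsY]
    have hz : ((n : ℝ) - 2) * (g X ξ x * C.act Y (θ ξ) x
        - g Y ξ x * C.act X (θ ξ) x) = 0 := by
      linear_combination g X ξ x * hY - g Y ξ x * hX
    rcases mul_eq_zero.mp hz with h | h
    · exact absurd h hn2
    · exact h
  refine ⟨hgoal1, fun X Y => ?_⟩
  funext x
  have a1 := congrFun (hprop X Y) x
  have a2 := congrFun (hgoal1 X Y) x
  simp only [Pi.sub_apply, Pi.mul_apply, Pi.zero_apply] at a1 a2 ⊢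
  linear_combination -a1 - a2
end

section
/- Let ξ be a unit vector field on an n-dimensional Riemannian manifold satisfying ∇_X ξ = -fX + g(X,ξ)θ^♯ with f = θ(ξ). Then the Hodge Laplacian of ξ^♭ equals (n-1)df + (n-1)fθ - ∇_ξ θ - (δθ)ξ^♭. -/
open scoped BigOperators

variable {M V : Type*} [AddCommGroup V] [Module (M → ℝ) V]

/-- The Hodge Laplacian of `ξ♭` equals
`(n-1)df + (n-1)fθ - ∇_ξ θ - (δθ)ξ♭`, with `f = θ(ξ)`. -/
theorem hodge_laplacian_unit_field
    (C : VFCalculus M V) (g : V →ₗ[M → ℝ] V →ₗ[M → ℝ] (M → ℝ)) (hg : IsMetric g)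
    (nab : V → V → V) (hnab : IsLeviCivita C g nab)
    (θ : V →ₗ[M → ℝ] (M → ℝ)) (θs : V) (hθs : ∀ Y : V, g θs Y = θ Y)
    (ξ : V) (hunit : g ξ ξ = 1)
    (hxi : ∀ X : V, nab X ξ = -(θ ξ • X) + g X ξ • θs)
    {n : ℕ} (e : Fin n → V) (he : IsONFrame g e) :
    ∀ X : V,
      C.act X (codiff C nab e (fun Z => g ξ Z))
        + codiff2 C nab e (dOne C (fun Z => g ξ Z)) X
      = (fun _ => (n : ℝ) - 1) * C.act X (θ ξ)
        + (fun _ => (n : ℝ) - 1) * (θ ξ * θ X)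
        - nabOne C nab (fun Z => θ Z) ξ X
        - codiff C nab e (fun Z => θ Z) * g ξ X := by
  obtain ⟨⟨cadd1, csmul1, cadd2, csmul2⟩, tf, mc⟩ := hnab
  obtain ⟨hgsymm, -, -⟩ := hg
  obtain ⟨hon, hspan⟩ := he
  intro X
  -- act of zero vector field
  have act_zero : ∀ h : M → ℝ, C.act 0 h = 0 := by
    intro h
    have h0 : ((0 : M → ℝ) • (0 : V)) = (0 : V) := zero_smul _ _
    calc C.act 0 h = C.act ((0 : M → ℝ) • (0 : V)) h := by rw [h0]
      _ = (0 : M → ℝ) * C.act 0 h := C.act_smul_left _ _ _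
      _ = 0 := zero_mul _
  have nab_zero : ∀ Y : V, nab 0 Y = 0 := by
    intro Y
    have h0 : ((0 : M → ℝ) • (0 : V)) = (0 : V) := zero_smul _ _
    calc nab 0 Y = nab ((0 : M → ℝ) • (0 : V)) Y := by rw [h0]
      _ = (0 : M → ℝ) • nab 0 Y := csmul1 _ _ _
      _ = 0 := zero_smul _ _
  have act_sum : ∀ (c : Fin n → M → ℝ) (h : M → ℝ),
      C.act (∑ i, c i • e i) h = ∑ i, c i * C.act (e i) h := by
    intro c h
    have : ∀ s : Finset (Fin n),
        C.act (∑ i ∈ s, c i • e i) h = ∑ i ∈ s, c i * C.act (e i) h := by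
      intro s
      induction s using Finset.induction_on with
      | empty => simpa using act_zero h
      | insert _ _ hx ih =>
          rw [Finset.sum_insert hx, Finset.sum_insert hx, C.act_add_left,
            C.act_smul_left, ih]
    exact this _
  have nab_sum : ∀ (c : Fin n → M → ℝ) (Y : V),
      nab (∑ i, c i • e i) Y = ∑ i, c i • nab (e i) Y := by
    intro c Y
    have : ∀ s : Finset (Fin n),
        nab (∑ i ∈ s, c i • e i) Y = ∑ i ∈ s, c i • nab (e i) Y := by
      intro s
      induction s using Finset.induction_on with
      | empty => simpa using nab_zero Y
      | insert _ _ hx ih =>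
          rw [Finset.sum_insert hx, Finset.sum_insert hx, cadd1, csmul1, ih]
    exact this _
  have hact_span : ∀ h : M → ℝ, C.act ξ h = ∑ i, g ξ (e i) * C.act (e i) h := by
    intro h
    conv_lhs => rw [hspan ξ]
    exact act_sum _ _
  have hnab_span : ∀ Y : V, nab ξ Y = ∑ i, g ξ (e i) • nab (e i) Y := by
    intro Y
    conv_lhs => rw [hspan ξ]
    exact nab_sum _ _
  -- act with a constant multiple / subtraction
  have act_constmul : ∀ (Y : V) (c : ℝ) (h : M → ℝ),
      C.act Y ((fun _ => c) * h) = (fun _ => c) * C.act Y h := by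
    intro Y c h
    rw [C.act_mul, C.act_const]
    funext x
    simp [Pi.add_apply, Pi.mul_apply]
  have act_sub : ∀ (Y : V) (h₁ h₂ : M → ℝ),
      C.act Y (h₁ - h₂) = C.act Y h₁ - C.act Y h₂ := by
    intro Y h₁ h₂
    have hrw : h₁ - h₂ = h₁ + (fun _ => (-1 : ℝ)) * h₂ := by
      funext x; simp; ring
    rw [hrw, C.act_add_right, act_constmul]
    funext x; simp; ring
  -- key computation: g (nab A ξ) B
  have hA : ∀ A B : V, g (nab A ξ) B = -(θ ξ * g A B) + g A ξ * θ B := by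
    intro A B
    rw [hxi A]
    simp only [map_add, map_neg, map_smul, LinearMap.add_apply, LinearMap.neg_apply,
      LinearMap.smul_apply, smul_eq_mul, hθs]
  -- d(ξ♭) = ξ♭ ∧ θ
  have hB : ∀ A B : V, dOne C (fun Z => g ξ Z) A B = g ξ A * θ B - g ξ B * θ A := by
    intro A B
    unfold dOne
    rw [← tf A B]
    simp only [map_sub]
    rw [mc A ξ B, mc B ξ A, hA A B, hA B A,
      hgsymm A B, hgsymm A ξ, hgsymm B ξ]
    funext x
    simp only [Pi.add_apply, Pi.sub_apply, Pi.neg_apply, Pi.mul_apply]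
    ring
  -- frame sum identities
  have hgsum : (∑ i, g (e i) (e i)) = fun _ => (n : ℝ) := by
    have h1 : ∀ i : Fin n, g (e i) (e i) = fun _ => (1 : ℝ) := by
      intro i; rw [hon i i]; simp
    rw [Finset.sum_congr rfl fun i _ => h1 i]
    funext x
    simp [Finset.sum_apply]
  have hθsum : ∀ Y : V, (∑ i, g Y (e i) * θ (e i)) = θ Y := by
    intro Y
    conv_rhs => rw [hspan Y]
    rw [map_sum]
    simp only [map_smul, smul_eq_mul]
  -- δ(ξ♭) = (n-1) f
  have hC : codiff C nab e (fun Z => g ξ Z) = (fun _ => (n : ℝ) - 1) * θ ξ := by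
    unfold codiff nabOne
    have hterm : ∀ i : Fin n, C.act (e i) (g ξ (e i)) - g ξ (nab (e i) (e i))
        = -(θ ξ * g (e i) (e i)) + g ξ (e i) * θ (e i) := by
      intro i
      rw [mc (e i) ξ (e i), hA (e i) (e i), hgsymm (e i) ξ]
      funext x
      simp only [Pi.add_apply, Pi.sub_apply, Pi.neg_apply, Pi.mul_apply]
      ring
    rw [Finset.sum_congr rfl fun i _ => hterm i, Finset.sum_add_distrib, hθsum ξ]
    have h2 : (∑ i, -(θ ξ * g (e i) (e i))) = -(θ ξ * fun _ => (n : ℝ)) := by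
      rw [Finset.sum_neg_distrib, ← Finset.mul_sum, hgsum]
    rw [h2]
    funext x
    simp only [Pi.add_apply, Pi.sub_apply, Pi.neg_apply, Pi.mul_apply, Pi.one_apply]
    ring
  -- ∇_ξ θ as a frame sum
  have hNab1 : nabOne C nab (fun Z => θ Z) ξ X
      = ∑ i, g ξ (e i) * (C.act (e i) (θ X) - θ (nab (e i) X)) := by
    unfold nabOne
    rw [hact_span (θ X), hnab_span X]
    simp only [map_sum, map_smul, smul_eq_mul]
    rw [← Finset.sum_sub_distrib]
    exact Finset.sum_congr rfl fun i _ => by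
      funext x; simp only [Pi.sub_apply, Pi.mul_apply]; ring
  -- the per-index identity for δ(dξ♭)
  have hterm2 : ∀ i : Fin n,
      C.act (e i) (dOne C (fun Z => g ξ Z) (e i) X)
        - dOne C (fun Z => g ξ Z) (nab (e i) (e i)) X
        - dOne C (fun Z => g ξ Z) (e i) (nab (e i) X)
      = -(θ ξ * g (e i) (e i)) * θ X + θ ξ * g X (e i) * θ (e i)
        + g ξ (e i) * (C.act (e i) (θ X) - θ (nab (e i) X))
        - g ξ X * (C.act (e i) (θ (e i)) - θ (nab (e i) (e i))) := by
    intro i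
    simp only [hB]
    rw [act_sub, C.act_mul, C.act_mul, mc (e i) ξ (e i), mc (e i) ξ X,
      hA (e i) (e i), hA (e i) X, hgsymm (e i) ξ, hgsymm (e i) X]
    funext x
    simp only [Pi.add_apply, Pi.sub_apply, Pi.neg_apply, Pi.mul_apply]
    ring
  -- δ(d ξ♭)
  have hD : codiff2 C nab e (dOne C (fun Z => g ξ Z)) X
      = (fun _ => (n : ℝ) - 1) * (θ ξ * θ X)
        - nabOne C nab (fun Z => θ Z) ξ X
        - codiff C nab e (fun Z => θ Z) * g ξ X := by
    unfold codiff2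
    rw [Finset.sum_congr rfl fun i _ => hterm2 i]
    rw [Finset.sum_sub_distrib, Finset.sum_add_distrib, Finset.sum_add_distrib]
    have s1 : (∑ i, -(θ ξ * g (e i) (e i)) * θ X) = -(θ ξ * (fun _ => (n : ℝ)) * θ X) := by
      have : ∀ i : Fin n, -(θ ξ * g (e i) (e i)) * θ X = -(θ ξ * θ X * g (e i) (e i)) := by
        intro i; funext x; simp only [Pi.neg_apply, Pi.mul_apply]; ring
      rw [Finset.sum_congr rfl fun i _ => this i, Finset.sum_neg_distrib,
        ← Finset.mul_sum, hgsum]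
      funext x; simp only [Pi.neg_apply, Pi.mul_apply]; ring
    have s2 : (∑ i, θ ξ * g X (e i) * θ (e i)) = θ ξ * θ X := by
      have : ∀ i : Fin n, θ ξ * g X (e i) * θ (e i) = θ ξ * (g X (e i) * θ (e i)) := by
        intro i; funext x; simp only [Pi.mul_apply]; ring
      rw [Finset.sum_congr rfl fun i _ => this i, ← Finset.mul_sum, hθsum X]
    have s4 : (∑ i, g ξ X * (C.act (e i) (θ (e i)) - θ (nab (e i) (e i))))
        = g ξ X * (-codiff C nab e (fun Z => θ Z)) := by
      rw [← Finset.mul_sum]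
      unfold codiff nabOne
      funext x; simp only [Pi.mul_apply, Pi.neg_apply]; ring
    rw [s1, s2, ← hNab1, s4]
    funext x
    simp only [Pi.add_apply, Pi.sub_apply, Pi.neg_apply, Pi.mul_apply, Pi.one_apply]
    ring
  rw [hC, hD, act_constmul]
  funext x
  simp only [Pi.add_apply, Pi.sub_apply, Pi.neg_apply, Pi.mul_apply]
  ring
end

section
/- Let (M,g) be a Riemannian manifold with a unit vector field ξ and a 1-form θ with θ(ξ) = 0 satisfying ∇_X ξ = g(X,ξ)θ^♯ for all X. If dθ = ξ^♭ ∧ α with α(ξ) = 0, then α = ∇_ξ θ + |θ|²ξ^♭. -/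
open scoped BigOperators

variable {M V : Type*} [AddCommGroup V] [Module (M → ℝ) V]

/-- If `dθ = ξ♭ ∧ α` with `α(ξ) = 0`, then `α = ∇_ξ θ + |θ|² ξ♭`. -/
theorem alpha_formula
    (C : VFCalculus M V) (g : V →ₗ[M → ℝ] V →ₗ[M → ℝ] (M → ℝ)) (hg : IsMetric g)
    (nab : V → V → V) (hnab : IsLeviCivita C g nab)
    (θ : V →ₗ[M → ℝ] (M → ℝ)) (θs : V) (hθs : ∀ Y : V, g θs Y = θ Y)
    (ξ : V) (hunit : g ξ ξ = 1) (hθξ : θ ξ = 0)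
    (hxi : ∀ X : V, nab X ξ = g X ξ • θs)
    (α : V → M → ℝ)
    (hα_add : ∀ X Y : V, α (X + Y) = α X + α Y)
    (hα_smul : ∀ (f : M → ℝ) (X : V), α (f • X) = f * α X)
    (hαξ : α ξ = 0)
    (hdθ : ∀ X Y : V, dOne C (fun Z => θ Z) X Y = g ξ X * α Y - g ξ Y * α X) :
    ∀ X : V, α X = nabOne C nab (fun Z => θ Z) ξ X + θ θs * g ξ X := by
  intro X
  have hTF := hnab.2.1 ξ X
  have h1 := hdθ ξ X
  have hbr : θ (C.bracket ξ X) = θ (nab ξ X) - g X ξ * θ θs := by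
    rw [← hTF, map_sub, hxi, map_smul]; rfl
  have hzero : C.act X (θ ξ) = 0 := by rw [hθξ]; exact C.act_const X 0
  unfold dOne at h1
  beta_reduce at h1
  rw [hzero, hbr, hunit, hαξ] at h1
  unfold nabOne
  have hsym : g X ξ = g ξ X := hg.1 X ξ
  funext x
  have h2 := congrFun h1 x
  have h3 := congrFun hsym x
  simp only [Pi.sub_apply, Pi.mul_apply, Pi.add_apply, Pi.one_apply, Pi.zero_apply] at h2 ⊢
  linear_combination -h2 + θ θs x * h3
end

section
/- Let (M,g) be a Ricci-flat Riemannian manifold, ξ a unit vector field and θ a coclosed 1-form with θ(ξ)=0 satisfying ∇_X ξ = g(X,ξ)θ^♯ and dθ = ξ^♭ ∧ α where α = ∇_ξθ + |θ|²ξ^♭ and α(ξ)=0. Then δ(∇_{θ^♯}θ) = |α|² - |∇θ|². -/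
open scoped BigOperators

variable {M V : Type*} [AddCommGroup V] [Module (M → ℝ) V]

section Aux
variable {M V : Type*} [AddCommGroup V] [Module (M → ℝ) V]

namespace VFCalculus
variable (C : VFCalculus M V)

lemma act_zero_right (X : V) : C.act X 0 = 0 := C.act_const X 0

lemma act_zero_left_s17 (f : M → ℝ) : C.act 0 f = 0 := by
  have h := C.act_add_left 0 0 f
  rw [add_zero] at h
  exact (left_eq_add.mp h)

lemma act_neg_left (X : V) (f : M → ℝ) : C.act (-X) f = -C.act X f := by
  have h := C.act_add_left X (-X) f
  rw [add_neg_cancel, C.act_zero_left_s17] at h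
  exact (neg_eq_of_add_eq_zero_right h.symm).symm

lemma act_sub_left (X Y : V) (f : M → ℝ) : C.act (X - Y) f = C.act X f - C.act Y f := by
  rw [sub_eq_add_neg, C.act_add_left, C.act_neg_left, sub_eq_add_neg]

lemma act_neg_right (X : V) (f : M → ℝ) : C.act X (-f) = -C.act X f := by
  have h := C.act_add_right X f (-f)
  rw [add_neg_cancel, C.act_zero_right] at h
  exact (neg_eq_of_add_eq_zero_right h.symm).symm

lemma act_sub_right (X : V) (f g : M → ℝ) : C.act X (f - g) = C.act X f - C.act X g := by
  rw [sub_eq_add_neg, C.act_add_right, C.act_neg_right, sub_eq_add_neg]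

lemma act_sum_right (X : V) {ι : Type*} (s : Finset ι) (F : ι → M → ℝ) :
    C.act X (∑ i ∈ s, F i) = ∑ i ∈ s, C.act X (F i) := by
  classical
  induction s using Finset.induction with
  | empty => simp [C.act_zero_right]
  | insert _ _ h ih => rw [Finset.sum_insert h, Finset.sum_insert h, C.act_add_right, ih]

end VFCalculus
end Aux

section Aux2
variable {M V : Type*} [AddCommGroup V] [Module (M → ℝ) V]
variable (C : VFCalculus M V) (g : V →ₗ[M → ℝ] V →ₗ[M → ℝ] (M → ℝ))
variable (nab : V → V → V)

lemma nab_neg_left (h : IsConnection C nab) (X Y : V) : nab (-X) Y = -nab X Y := by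
  have h2 := h.2.1 (-1 : M → ℝ) X Y
  rwa [neg_one_smul, neg_one_smul] at h2

lemma nab_sub_left (h : IsConnection C nab) (X X' Y : V) :
    nab (X - X') Y = nab X Y - nab X' Y := by
  rw [sub_eq_add_neg, h.1, nab_neg_left C nab h, sub_eq_add_neg]

lemma ricci_identity (hLC : IsLeviCivita C g nab) (θ : V →ₗ[M → ℝ] (M → ℝ)) (X Z Y : V) :
    secondD C nab (fun W => θ W) X Z Y - secondD C nab (fun W => θ W) Z X Y
      = -(θ (Rm C nab X Z Y)) := by
  obtain ⟨hConn, hTF, hM⟩ := hLC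
  have hb : C.act X (C.act Z (θ Y)) - C.act Z (C.act X (θ Y))
      = C.act (nab X Z) (θ Y) - C.act (nab Z X) (θ Y) := by
    rw [← C.act_sub_left, hTF, C.act_bracket]
  have h3 : θ (nab (C.bracket X Z) Y)
      = θ (nab (nab X Z) Y) - θ (nab (nab Z X) Y) := by
    rw [← hTF, nab_sub_left C nab hConn, map_sub]
  simp only [secondD, nabOne, Rm, map_sub, C.act_sub_right]
  linear_combination hb - h3

lemma rm_antisym (hLC : IsLeviCivita C g nab) (X Y Z W : V) :
    g (Rm C nab X Y Z) W + g Z (Rm C nab X Y W) = 0 := by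
  obtain ⟨hConn, hTF, hM⟩ := hLC
  have h1 : C.act X (C.act Y (g Z W))
      = g (nab X (nab Y Z)) W + g (nab Y Z) (nab X W)
        + (g (nab X Z) (nab Y W) + g Z (nab X (nab Y W))) := by
    rw [hM Y Z W, C.act_add_right, hM X (nab Y Z) W, hM X Z (nab Y W)]
  have h2 : C.act Y (C.act X (g Z W))
      = g (nab Y (nab X Z)) W + g (nab X Z) (nab Y W)
        + (g (nab Y Z) (nab X W) + g Z (nab Y (nab X W))) := by
    rw [hM X Z W, C.act_add_right, hM Y (nab X Z) W, hM Y Z (nab X W)]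
  have h3 : C.act X (C.act Y (g Z W)) - C.act Y (C.act X (g Z W))
      = g (nab (C.bracket X Y) Z) W + g Z (nab (C.bracket X Y) W) := by
    rw [← C.act_bracket, hM]
  simp only [Rm, map_sub, LinearMap.sub_apply]
  linear_combination h2 - h1 + h3

end Aux2

section Aux3
variable {M V : Type*} [AddCommGroup V] [Module (M → ℝ) V]
variable (C : VFCalculus M V) (nab : V → V → V) (θ : V →ₗ[M → ℝ] (M → ℝ))

lemma nab_zero_left (h : IsConnection C nab) (Y : V) : nab 0 Y = 0 := by
  have h2 := h.1 0 0 Y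
  rw [add_zero] at h2
  exact (left_eq_add.mp h2)

lemma nab_zero_right (h : IsConnection C nab) (X : V) : nab X 0 = 0 := by
  have h2 := h.2.2.1 X 0 0
  rw [add_zero] at h2
  exact (left_eq_add.mp h2)

lemma T_def (X Y : V) : nabOne C nab (fun Z => θ Z) X Y = C.act X (θ Y) - θ (nab X Y) := rfl

lemma T_zero_left (h : IsConnection C nab) (Y : V) :
    nabOne C nab (fun Z => θ Z) 0 Y = 0 := by
  rw [T_def, nab_zero_left C nab h, map_zero, C.act_zero_left_s17, sub_zero]

lemma T_zero_right (h : IsConnection C nab) (X : V) :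
    nabOne C nab (fun Z => θ Z) X 0 = 0 := by
  rw [T_def, nab_zero_right C nab h, map_zero, C.act_zero_right, sub_zero]

lemma T_add_left (h : IsConnection C nab) (X X' Y : V) :
    nabOne C nab (fun Z => θ Z) (X + X') Y
      = nabOne C nab (fun Z => θ Z) X Y + nabOne C nab (fun Z => θ Z) X' Y := by
  simp only [T_def, C.act_add_left, h.1, map_add]
  ring

lemma T_smul_left (h : IsConnection C nab) (f : M → ℝ) (X Y : V) :
    nabOne C nab (fun Z => θ Z) (f • X) Y = f * nabOne C nab (fun Z => θ Z) X Y := by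
  simp only [T_def, C.act_smul_left, h.2.1, map_smul, smul_eq_mul]
  ring

lemma T_add_right (h : IsConnection C nab) (X Y Y' : V) :
    nabOne C nab (fun Z => θ Z) X (Y + Y')
      = nabOne C nab (fun Z => θ Z) X Y + nabOne C nab (fun Z => θ Z) X Y' := by
  simp only [T_def, C.act_add_right, h.2.2.1, map_add]
  ring

lemma T_smul_right (h : IsConnection C nab) (f : M → ℝ) (X Y : V) :
    nabOne C nab (fun Z => θ Z) X (f • Y) = f * nabOne C nab (fun Z => θ Z) X Y := by
  simp only [T_def, h.2.2.2, map_add, map_smul, smul_eq_mul, C.act_mul]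
  ring

lemma T_sum_left (h : IsConnection C nab) {ι : Type*} (s : Finset ι)
    (c : ι → M → ℝ) (v : ι → V) (Y : V) :
    nabOne C nab (fun Z => θ Z) (∑ i ∈ s, c i • v i) Y
      = ∑ i ∈ s, c i * nabOne C nab (fun Z => θ Z) (v i) Y := by
  classical
  induction s using Finset.induction with
  | empty => simp [T_zero_left C nab θ h]
  | insert _ _ hns ih =>
      rw [Finset.sum_insert hns, Finset.sum_insert hns, T_add_left C nab θ h,
        T_smul_left C nab θ h, ih]

lemma T_sum_right (h : IsConnection C nab) {ι : Type*} (s : Finset ι)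
    (c : ι → M → ℝ) (v : ι → V) (X : V) :
    nabOne C nab (fun Z => θ Z) X (∑ i ∈ s, c i • v i)
      = ∑ i ∈ s, c i * nabOne C nab (fun Z => θ Z) X (v i) := by
  classical
  induction s using Finset.induction with
  | empty => simp [T_zero_right C nab θ h]
  | insert _ _ hns ih =>
      rw [Finset.sum_insert hns, Finset.sum_insert hns, T_add_right C nab θ h,
        T_smul_right C nab θ h, ih]

end Aux3
/-- `δ(∇_{θ♯} θ) = |α|² - |∇θ|²` on a Ricci-flat manifold. -/
theorem codiff_nabla_theta
    (C : VFCalculus M V) (g : V →ₗ[M → ℝ] V →ₗ[M → ℝ] (M → ℝ)) (hg : IsMetric g)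
    (nab : V → V → V) (hnab : IsLeviCivita C g nab)
    (θ : V →ₗ[M → ℝ] (M → ℝ)) (θs : V) (hθs : ∀ Y : V, g θs Y = θ Y)
    (ξ : V) (hunit : g ξ ξ = 1) (hθξ : θ ξ = 0)
    (hxi : ∀ X : V, nab X ξ = g X ξ • θs)
    {n : ℕ} (e : Fin n → V) (he : IsONFrame g e)
    (hric : ∀ X Y : V, Ricci C g nab e X Y = 0)
    (hδθ : codiff C nab e (fun Z => θ Z) = 0)
    (α : V → M → ℝ)
    (hαdef : ∀ X : V, α X = nabOne C nab (fun Z => θ Z) ξ X + θ θs * g ξ X)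
    (hαξ : α ξ = 0)
    (hdθ : ∀ X Y : V, dOne C (fun Z => θ Z) X Y = g ξ X * α Y - g ξ Y * α X) :
    codiff C nab e (fun X => nabOne C nab (fun Z => θ Z) θs X)
      = (∑ i, α (e i) * α (e i))
        - ∑ i, ∑ j, nabOne C nab (fun Z => θ Z) (e i) (e j)
            * nabOne C nab (fun Z => θ Z) (e i) (e j) := by
  classical
  obtain ⟨heON, heExp⟩ := he
  have hConn : IsConnection C nab := hnab.1
  have hTF : IsTorsionFree C nab := hnab.2.1
  have hM : ∀ X Y Z : V, C.act X (g Y Z) = g (nab X Y) Z + g Y (nab X Z) := hnab.2.2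
  have hgrad : ∀ X Y : V, g (nab X θs) Y = nabOne C nab (fun Z => θ Z) X Y := by
    intro X Y
    have h1 := hM X θs Y
    rw [hθs, hθs] at h1
    rw [T_def]
    linear_combination -h1
  have hexp : ∀ X : V, nab X θs = ∑ j, nabOne C nab (fun Z => θ Z) X (e j) • e j := by
    intro X
    conv_lhs => rw [heExp (nab X θs)]
    exact Finset.sum_congr rfl fun j _ => by rw [hgrad]
  have hE : ∀ i, nabOne C nab (fun Z => θ Z) (nab (e i) θs) (e i)
      = ∑ j, nabOne C nab (fun Z => θ Z) (e i) (e j)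
          * nabOne C nab (fun Z => θ Z) (e j) (e i) := by
    intro i
    rw [hexp (e i), T_sum_left C nab θ hConn]
  have hC : ∑ i, secondD C nab (fun Z => θ Z) θs (e i) (e i) = 0 := by
    have hsum0 : ∑ i, nabOne C nab (fun Z => θ Z) (e i) (e i) = 0 := by
      have h := hδθ
      simp only [codiff] at h
      exact neg_eq_zero.mp h
    have part1 : ∑ i, C.act θs (nabOne C nab (fun Z => θ Z) (e i) (e i)) = 0 := by
      rw [← C.act_sum_right, hsum0, C.act_zero_right]
    have hAanti : ∀ i j, g (nab θs (e i)) (e j) + g (nab θs (e j)) (e i) = 0 := by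
      intro i j
      have h1 := hM θs (e i) (e j)
      rw [heON i j, C.act_const, hg.1 (e i) (nab θs (e j))] at h1
      exact h1.symm
    have hexpand : ∀ i, nabOne C nab (fun Z => θ Z) (nab θs (e i)) (e i)
          + nabOne C nab (fun Z => θ Z) (e i) (nab θs (e i))
        = ∑ j, g (nab θs (e i)) (e j) *
            (nabOne C nab (fun Z => θ Z) (e j) (e i)
              + nabOne C nab (fun Z => θ Z) (e i) (e j)) := by
      intro i
      conv_lhs => rw [heExp (nab θs (e i))]
      rw [T_sum_left C nab θ hConn, T_sum_right C nab θ hConn, ← Finset.sum_add_distrib]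
      exact Finset.sum_congr rfl fun j _ => by ring
    have hS : (∑ i, ∑ j, g (nab θs (e i)) (e j) *
          (nabOne C nab (fun Z => θ Z) (e j) (e i)
            + nabOne C nab (fun Z => θ Z) (e i) (e j))) = 0 := by
      have hneg : (∑ i, ∑ j, g (nab θs (e i)) (e j) *
            (nabOne C nab (fun Z => θ Z) (e j) (e i)
              + nabOne C nab (fun Z => θ Z) (e i) (e j)))
          = -∑ i, ∑ j, g (nab θs (e i)) (e j) *
              (nabOne C nab (fun Z => θ Z) (e j) (e i)
                + nabOne C nab (fun Z => θ Z) (e i) (e j)) := by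
        have hcomm : (∑ i, ∑ j, g (nab θs (e i)) (e j) *
              (nabOne C nab (fun Z => θ Z) (e j) (e i)
                + nabOne C nab (fun Z => θ Z) (e i) (e j)))
            = ∑ i, ∑ j, g (nab θs (e j)) (e i) *
                (nabOne C nab (fun Z => θ Z) (e i) (e j)
                  + nabOne C nab (fun Z => θ Z) (e j) (e i)) := Finset.sum_comm
        conv_lhs => rw [hcomm]
        rw [← Finset.sum_neg_distrib]
        refine Finset.sum_congr rfl fun i _ => ?_
        rw [← Finset.sum_neg_distrib]
        refine Finset.sum_congr rfl fun j _ => ?_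
        linear_combination (nabOne C nab (fun Z => θ Z) (e j) (e i)
          + nabOne C nab (fun Z => θ Z) (e i) (e j)) * hAanti i j
      funext x
      have hx := congrFun hneg x
      simp only [Pi.neg_apply] at hx
      have : (0 : M → ℝ) x = 0 := rfl
      rw [this]
      linarith
    have part2 : ∑ i, (nabOne C nab (fun Z => θ Z) (nab θs (e i)) (e i)
        + nabOne C nab (fun Z => θ Z) (e i) (nab θs (e i))) = 0 := by
      rw [Finset.sum_congr rfl fun i _ => hexpand i]
      exact hS
    have hCsum : ∑ i, secondD C nab (fun Z => θ Z) θs (e i) (e i)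
        = (∑ i, C.act θs (nabOne C nab (fun Z => θ Z) (e i) (e i)))
          - ∑ i, (nabOne C nab (fun Z => θ Z) (nab θs (e i)) (e i)
              + nabOne C nab (fun Z => θ Z) (e i) (nab θs (e i))) := by
      rw [← Finset.sum_sub_distrib]
      exact Finset.sum_congr rfl fun i _ => by simp only [secondD]; ring
    rw [hCsum, part1, part2, sub_zero]
  have hD : ∑ i, θ (Rm C nab (e i) θs (e i)) = 0 := by
    have h1 : ∀ i, θ (Rm C nab (e i) θs (e i)) = -(g (Rm C nab (e i) θs θs) (e i)) := by
      intro i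
      rw [← hθs]
      linear_combination rm_antisym C g nab hnab (e i) θs θs (e i)
    calc ∑ i, θ (Rm C nab (e i) θs (e i))
        = ∑ i, -(g (Rm C nab (e i) θs θs) (e i)) := Finset.sum_congr rfl fun i _ => h1 i
      _ = -(Ricci C g nab e θs θs) := by rw [Ricci, ← Finset.sum_neg_distrib]
      _ = 0 := by rw [hric θs θs, neg_zero]
  have hmain : codiff C nab e (fun X => nabOne C nab (fun Z => θ Z) θs X)
      = -∑ i, ∑ j, nabOne C nab (fun Z => θ Z) (e i) (e j)
          * nabOne C nab (fun Z => θ Z) (e j) (e i) := by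
    have h1 : ∀ i, secondD C nab (fun Z => θ Z) (e i) θs (e i)
        = secondD C nab (fun Z => θ Z) θs (e i) (e i)
          - θ (Rm C nab (e i) θs (e i)) := fun i => by
      linear_combination ricci_identity C g nab hnab θ (e i) θs (e i)
    have h0 : codiff C nab e (fun X => nabOne C nab (fun Z => θ Z) θs X)
        = -∑ i, (secondD C nab (fun Z => θ Z) (e i) θs (e i)
            + nabOne C nab (fun Z => θ Z) (nab (e i) θs) (e i)) := by
      simp only [codiff]
      congr 1
      refine Finset.sum_congr rfl fun i _ => ?_
      simp only [secondD, nabOne]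
      ring
    have h2 : ∑ i, (secondD C nab (fun Z => θ Z) (e i) θs (e i)
          + nabOne C nab (fun Z => θ Z) (nab (e i) θs) (e i))
        = (∑ i, secondD C nab (fun Z => θ Z) θs (e i) (e i))
          - (∑ i, θ (Rm C nab (e i) θs (e i)))
          + ∑ i, ∑ j, nabOne C nab (fun Z => θ Z) (e i) (e j)
              * nabOne C nab (fun Z => θ Z) (e j) (e i) := by
      rw [← Finset.sum_sub_distrib, ← Finset.sum_add_distrib]
      exact Finset.sum_congr rfl fun i _ => by rw [h1 i, hE i]
    rw [h0, h2, hC, hD]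
    ring
  have hF' : ∑ i, ∑ j, nabOne C nab (fun Z => θ Z) (e i) (e j)
        * (nabOne C nab (fun Z => θ Z) (e i) (e j)
            - nabOne C nab (fun Z => θ Z) (e j) (e i))
      = ∑ i, α (e i) * α (e i) := by
    have hd : ∀ X Y : V, nabOne C nab (fun Z => θ Z) X Y - nabOne C nab (fun Z => θ Z) Y X
        = dOne C (fun Z => θ Z) X Y := by
      intro X Y
      simp only [dOne, T_def]
      rw [← hTF X Y, map_sub]
      ring
    have hdiff : ∀ i j, nabOne C nab (fun Z => θ Z) (e i) (e j)
          - nabOne C nab (fun Z => θ Z) (e j) (e i)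
        = g ξ (e i) * α (e j) - g ξ (e j) * α (e i) := by
      intro i j
      rw [hd, hdθ]
    have hrow : ∀ j, ∑ i, g ξ (e i) * nabOne C nab (fun Z => θ Z) (e i) (e j)
        = nabOne C nab (fun Z => θ Z) ξ (e j) := by
      intro j
      rw [← T_sum_left C nab θ hConn, ← heExp ξ]
    have hcol : ∀ i, ∑ j, g ξ (e j) * nabOne C nab (fun Z => θ Z) (e i) (e j)
        = nabOne C nab (fun Z => θ Z) (e i) ξ := by
      intro i
      rw [← T_sum_right C nab θ hConn, ← heExp ξ]
    have hTξ1 : ∀ Y, nabOne C nab (fun Z => θ Z) ξ Y = α Y - θ θs * g ξ Y := fun Y => by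
      linear_combination -hαdef Y
    have hTξ2 : ∀ X, nabOne C nab (fun Z => θ Z) X ξ = -(g X ξ * θ θs) := by
      intro X
      rw [T_def, hθξ, C.act_zero_right, hxi X, map_smul, smul_eq_mul]
      ring
    calc ∑ i, ∑ j, nabOne C nab (fun Z => θ Z) (e i) (e j)
          * (nabOne C nab (fun Z => θ Z) (e i) (e j)
              - nabOne C nab (fun Z => θ Z) (e j) (e i))
        = ∑ i, ∑ j, (g ξ (e i) * (nabOne C nab (fun Z => θ Z) (e i) (e j) * α (e j))
            - g ξ (e j) * (nabOne C nab (fun Z => θ Z) (e i) (e j) * α (e i))) := by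
          refine Finset.sum_congr rfl fun i _ => Finset.sum_congr rfl fun j _ => ?_
          rw [hdiff i j]; ring
      _ = (∑ i, ∑ j, g ξ (e i) * (nabOne C nab (fun Z => θ Z) (e i) (e j) * α (e j)))
          - ∑ i, ∑ j, g ξ (e j) * (nabOne C nab (fun Z => θ Z) (e i) (e j) * α (e i)) := by
          rw [← Finset.sum_sub_distrib]
          exact Finset.sum_congr rfl fun i _ => by rw [← Finset.sum_sub_distrib]
      _ = (∑ j, (∑ i, g ξ (e i) * nabOne C nab (fun Z => θ Z) (e i) (e j)) * α (e j))
          - ∑ i, (∑ j, g ξ (e j) * nabOne C nab (fun Z => θ Z) (e i) (e j)) * α (e i) := by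
          rw [Finset.sum_comm]
          congr 1
          · refine Finset.sum_congr rfl fun j _ => ?_
            rw [Finset.sum_mul]
            exact Finset.sum_congr rfl fun i _ => by ring
          · refine Finset.sum_congr rfl fun i _ => ?_
            rw [Finset.sum_mul]
            exact Finset.sum_congr rfl fun j _ => by ring
      _ = (∑ j, (α (e j) - θ θs * g ξ (e j)) * α (e j))
          - ∑ i, (-(g (e i) ξ * θ θs)) * α (e i) := by
          congr 1
          · exact Finset.sum_congr rfl fun j _ => by rw [hrow j, hTξ1 (e j)]
          · exact Finset.sum_congr rfl fun i _ => by rw [hcol i, hTξ2 (e i)]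
      _ = ∑ i, ((α (e i) - θ θs * g ξ (e i)) * α (e i) - (-(g (e i) ξ * θ θs)) * α (e i)) := by
          rw [← Finset.sum_sub_distrib]
      _ = ∑ i, α (e i) * α (e i) := by
          refine Finset.sum_congr rfl fun i _ => ?_
          rw [hg.1 (e i) ξ]
          ring
  have hsplit : ∑ i, ∑ j, nabOne C nab (fun Z => θ Z) (e i) (e j)
        * (nabOne C nab (fun Z => θ Z) (e i) (e j)
            - nabOne C nab (fun Z => θ Z) (e j) (e i))
      = (∑ i, ∑ j, nabOne C nab (fun Z => θ Z) (e i) (e j)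
            * nabOne C nab (fun Z => θ Z) (e i) (e j))
        - ∑ i, ∑ j, nabOne C nab (fun Z => θ Z) (e i) (e j)
            * nabOne C nab (fun Z => θ Z) (e j) (e i) := by
    rw [← Finset.sum_sub_distrib]
    refine Finset.sum_congr rfl fun i _ => ?_
    rw [← Finset.sum_sub_distrib]
    exact Finset.sum_congr rfl fun j _ => by ring
  rw [hmain]
  linear_combination hF' - hsplit
end
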